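/- Define I₂(d) = ∫₀^∞ ξ^{d+1} * e^ξ * (e^{2ξ} + 4 e^ξ + 1) / (e^ξ - 1)⁴ dξ. Then the function ξ ↦ ξ⁴ * e^ξ * (e^{2ξ} + 4 e^ξ + 1) / (e^ξ - 1)⁴ is integrable on (0, ∞) and I₂(3) = 4π². -/

import Mathlib

open Real MeasureTheory Set
open scoped Nat

/-! For `ξ > 0`, expanding in powers of `e^{-ξ}` gives
`ξ⁴ e^ξ (e^{2ξ} + 4e^ξ + 1)/(e^ξ - 1)⁴ = ∑ₙ n³ ξ⁴ e^{-nξ}`, the generating function of the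
cubes. Each term integrates to `n³ · 4!/n⁵ = 24/n²`, and since all terms are nonnegative,
monotone convergence gives integrability together with `I₂(3) = 24 ζ(2) = 4π²`. -/

theorem hasSum_pow_three_mul_geometric {𝕜 : Type*} [NormedField 𝕜] [HasSummableGeomSeries 𝕜]
    {x : 𝕜} (hx : ‖x‖ < 1) :
    HasSum (fun n : ℕ ↦ (n : 𝕜) ^ 3 * x ^ n) (x * (1 + 4 * x + x ^ 2) / (1 - x) ^ 4) := by
  have hx1 : 1 - x ≠ 0 := sub_ne_zero.mpr fun h ↦ by simp [← h] at hx
  -- `n³ = 6 C(n+3,3) - 12 C(n+2,2) + 7 C(n+1,1) - C(n,0)`, and `∑ C(n+k,k) xⁿ = 1/(1-x)^(k+1)`.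
  have series (k : ℕ) := hasSum_choose_mul_geometric_of_norm_lt_one (𝕜 := 𝕜) k hx
  convert! (((series 3).mul_left 6).sub ((series 2).mul_left 12)).add
    (((series 1).mul_left 7).sub (series 0)) using 1
  · funext n
    have c3 : (n + 3) * (n + 2).choose 2 = (n + 3).choose 3 * 3 := Nat.add_one_mul_choose_eq _ _
    have c2 : (n + 2) * (n + 1).choose 1 = (n + 2).choose 2 * 2 := Nat.add_one_mul_choose_eq _ _
    simp only [Nat.choose_one_right, Nat.choose_zero_right] at c2 ⊢
    have c3' := congrArg (Nat.cast : ℕ → 𝕜) c3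
    have c2' := congrArg (Nat.cast : ℕ → 𝕜) c2
    push_cast at c3' c2'
    push_cast
    linear_combination (2 * x ^ n) * c3' + ((n : 𝕜) - 3) * x ^ n * c2'
  · field_simp
    ring

theorem integrableOn_pow_mul_exp_neg_mul_Ioi (k : ℕ) {c : ℝ} (hc : 0 < c) :
    IntegrableOn (fun t : ℝ ↦ t ^ k * exp (-(c * t))) (Ioi 0) := by
  refine (integrableOn_rpow_mul_exp_neg_mul_rpow (s := k) (p := 1)
    (neg_one_lt_zero.trans_le k.cast_nonneg) one_pos hc).congr_fun (fun t _ ↦ ?_) measurableSet_Ioi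
  simp [rpow_natCast]

theorem integral_pow_mul_exp_neg_mul_Ioi (k : ℕ) {c : ℝ} (hc : 0 < c) :
    ∫ t in Ioi (0 : ℝ), t ^ k * exp (-(c * t)) = k ! / c ^ (k + 1) := by
  have h := integral_rpow_mul_exp_neg_mul_Ioi (a := k + 1) (by positivity) hc
  rw [add_sub_cancel_right, Gamma_nat_eq_factorial, ← Nat.cast_add_one] at h
  simp only [rpow_natCast] at h
  rw [h, one_div_pow, one_div_mul_eq_div]

theorem integrable_and_integral_eq_of_hasSum_of_nonneg {α : Type*} [MeasurableSpace α]
    {μ : Measure α} {F : ℕ → α → ℝ} {f : α → ℝ} {I : ℝ}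
    (hF_int : ∀ n, Integrable (F n) μ) (hF_nonneg : ∀ n, 0 ≤ᵐ[μ] F n)
    (hf : ∀ᵐ a ∂μ, HasSum (F · a) (f a)) (hI : HasSum (fun n ↦ ∫ a, F n a ∂μ) I) :
    Integrable f μ ∧ ∫ a, f a ∂μ = I := by
  have hF_nonneg' : ∀ᵐ a ∂μ, ∀ n, 0 ≤ F n a := ae_all_iff.mpr hF_nonneg
  have hf_nonneg : 0 ≤ᵐ[μ] f := by
    filter_upwards [hf, hF_nonneg'] with a ha h0 using ha.nonneg h0
  have hf_meas : AEStronglyMeasurable f μ :=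
    aestronglyMeasurable_of_tendsto_ae _
      (fun N ↦ Finset.aestronglyMeasurable_fun_sum _ fun n _ ↦ (hF_int n).1)
      (hf.mono fun a ha ↦ ha.tendsto_sum_nat)
  have hf_lintegral : ∫⁻ a, ENNReal.ofReal (f a) ∂μ = ENNReal.ofReal I := calc
    ∫⁻ a, ENNReal.ofReal (f a) ∂μ = ∫⁻ a, ∑' n, ENNReal.ofReal (F n a) ∂μ := by
      refine lintegral_congr_ae ?_
      filter_upwards [hf, hF_nonneg'] with a ha h0
      rw [← ha.tsum_eq, ENNReal.ofReal_tsum_of_nonneg h0 ha.summable]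
    _ = ∑' n, ∫⁻ a, ENNReal.ofReal (F n a) ∂μ :=
      lintegral_tsum fun n ↦ (hF_int n).1.aemeasurable.ennreal_ofReal
    _ = ∑' n, ENNReal.ofReal (∫ a, F n a ∂μ) := by
      congr 1 with n
      exact (ofReal_integral_eq_lintegral_ofReal (hF_int n) (hF_nonneg n)).symm
    _ = ENNReal.ofReal I := by
      rw [← ENNReal.ofReal_tsum_of_nonneg (fun n ↦ integral_nonneg_of_ae (hF_nonneg n))
        hI.summable, hI.tsum_eq]
  have hf_int : Integrable f μ := by
    refine ⟨hf_meas, ?_⟩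
    rw [hasFiniteIntegral_iff_ofReal hf_nonneg, hf_lintegral]
    exact ENNReal.ofReal_lt_top
  refine ⟨hf_int, ?_⟩
  rw [← ENNReal.ofReal_eq_ofReal_iff (integral_nonneg_of_ae hf_nonneg)
    (hI.nonneg fun n ↦ integral_nonneg_of_ae (hF_nonneg n)),
    ofReal_integral_eq_lintegral_ofReal hf_int hf_nonneg, hf_lintegral]

theorem hasSum_pow_three_mul_exp_neg_mul {ξ : ℝ} (hξ : 0 < ξ) :
    HasSum (fun n : ℕ ↦ (n : ℝ) ^ 3 * exp (-(n * ξ)))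
      (exp ξ * (exp (2 * ξ) + 4 * exp ξ + 1) / (exp ξ - 1) ^ 4) := by
  have hx : ‖exp (-ξ)‖ < 1 := by
    rw [norm_of_nonneg (exp_pos _).le, exp_lt_one_iff]
    exact neg_lt_zero.mpr hξ
  convert! hasSum_pow_three_mul_geometric hx using 1
  · funext n
    rw [← exp_nat_mul, mul_neg]
  · have hE : exp ξ - 1 ≠ 0 := (sub_pos.mpr (one_lt_exp_iff.mpr hξ)).ne'
    rw [exp_neg, two_mul, exp_add]
    field_simp

theorem integrableOn_natCast_pow_three_mul_pow_four_mul_exp_neg_mul (n : ℕ) :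
    IntegrableOn (fun ξ : ℝ ↦ (n : ℝ) ^ 3 * (ξ ^ 4 * exp (-(n * ξ)))) (Ioi 0) := by
  rcases n.eq_zero_or_pos with rfl | hn
  · simp
  · exact (integrableOn_pow_mul_exp_neg_mul_Ioi 4 (by positivity)).const_mul _

theorem integral_natCast_pow_three_mul_pow_four_mul_exp_neg_mul (n : ℕ) :
    ∫ ξ in Ioi (0 : ℝ), (n : ℝ) ^ 3 * (ξ ^ 4 * exp (-(n * ξ))) = 24 * (1 / (n : ℝ) ^ 2) := by
  rcases n.eq_zero_or_pos with rfl | hn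
  · simp
  · rw [integral_const_mul, integral_pow_mul_exp_neg_mul_Ioi 4 (by positivity)]
    field_simp
    norm_num [Nat.factorial]

/-- The integrand of `I₂(3)` is integrable on `(0, ∞)` and `I₂(3) = 4π²`, where
`I₂(d) = ∫₀^∞ ξ^{d+1} e^ξ (e^{2ξ} + 4e^ξ + 1)/(e^ξ - 1)⁴ dξ`. -/
theorem I2_three_eq_four_pi_sq :
    IntegrableOn
      (fun ξ : ℝ => ξ ^ 4 * Real.exp ξ * (Real.exp (2 * ξ) + 4 * Real.exp ξ + 1) /
        (Real.exp ξ - 1) ^ 4)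
      (Set.Ioi (0 : ℝ)) ∧
    ∫ ξ in Set.Ioi (0 : ℝ),
        ξ ^ 4 * Real.exp ξ * (Real.exp (2 * ξ) + 4 * Real.exp ξ + 1) /
          (Real.exp ξ - 1) ^ 4 = 4 * π ^ 2 := by
  refine integrable_and_integral_eq_of_hasSum_of_nonneg
    integrableOn_natCast_pow_three_mul_pow_four_mul_exp_neg_mul
    (fun n ↦ ae_of_all _ fun ξ ↦ by positivity) ?_ ?_
  · refine ae_restrict_of_forall_mem measurableSet_Ioi fun ξ hξ ↦ ?_
    convert! (hasSum_pow_three_mul_exp_neg_mul hξ).mul_left (ξ ^ 4) using 1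
    · funext n
      ring
    · ring
  · simp only [integral_natCast_pow_three_mul_pow_four_mul_exp_neg_mul]
    convert! hasSum_zeta_two.mul_left 24 using 1
    ring
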